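/- arXiv:0805.1088 — 7 statements merged into one kernel-verified Lean document; each statement's English description precedes it below -/
import Mathlib

section
/- For all positive integers K and N, the fractional stable set polytope of the enhanced conflict graph G_{K,N} is contained in ((2K-1)/K) times its stable set polytope, i.e., QSTAB(G_{K,N}) ⊆ ((2K-1)/K)·STAB(G_{K,N}). -/
open SimpleGraph Pointwise

/-- Vertex set of the enhanced conflict graph `G_{K,N}`: `(false, i, j)` is the unicast vertex
`u_{ij}` (input `i`, output `j`), and `(true, i, j)` is the broadcast (subflow) vertex `b_{ij}`. -/
abbrev CGVert (K N : ℕ) := Bool × Fin K × Fin N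

/-- The enhanced conflict graph `G_{K,N}` of a `K × N` switch with unicast and broadcast traffic:
two distinct vertices are adjacent iff they share an input and at least one of them is a unicast,
or they share an output and come from different inputs. -/
def ECG (K N : ℕ) : SimpleGraph (CGVert K N) where
  Adj v w := v ≠ w ∧
    ((v.2.1 = w.2.1 ∧ (v.1 = false ∨ w.1 = false)) ∨
     (v.2.2 = w.2.2 ∧ v.2.1 ≠ w.2.1))
  symm := ⟨by
    rintro v w ⟨hne, h⟩
    refine ⟨hne.symm, ?_⟩
    rcases h with ⟨h1, h2⟩ | ⟨h1, h2⟩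
    · exact Or.inl ⟨h1.symm, h2.symm⟩
    · exact Or.inr ⟨h1.symm, h2.symm⟩⟩
  loopless := ⟨fun v h => h.1 rfl⟩

/-- The stable set polytope of a graph: the convex hull of the 0/1 indicator vectors of the
independent (stable) sets. -/
def STAB {V : Type*} (G : SimpleGraph V) : Set (V → ℝ) :=
  convexHull ℝ {x | ∃ S : Set V, (∀ v ∈ S, ∀ w ∈ S, ¬ G.Adj v w) ∧
    x = S.indicator (fun _ => (1 : ℝ))}

/-- The fractional stable set polytope of a graph: nonnegative vectors whose sum over every
clique is at most `1`. -/
def QSTAB {V : Type*} (G : SimpleGraph V) : Set (V → ℝ) :=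
  {x | (∀ v, 0 ≤ x v) ∧ ∀ Q : Finset V, G.IsClique (Q : Set V) → ∑ v ∈ Q, x v ≤ 1}

/-- A graph is perfect if every induced subgraph has chromatic number equal to its clique
number. -/
def SimpleGraph.IsPerfect {V : Type*} (G : SimpleGraph V) : Prop :=
  ∀ S : Set V, (G.induce S).chromaticNumber = ((G.induce S).cliqueNum : ℕ∞)

/-- A graph has an odd hole if some induced subgraph is a chordless cycle of odd length at
least 5. -/
def SimpleGraph.HasOddHole {V : Type*} (G : SimpleGraph V) : Prop :=
  ∃ (n : ℕ) (S : Set V), 5 ≤ n ∧ Odd n ∧ Nonempty (G.induce S ≃g cycleGraph n)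


/-! Write `D = K m`. A point of `QSTAB` is a limit of points `c / D` with `c` integral and all
clique sums of `c` at most `D`, and `t • STAB` is compact, so it suffices to find `(2K - 1) m`
stable sets covering each vertex `v` exactly `c v` times. The unicasts form a bipartite
multigraph of maximum degree `D`, which Kőnig's theorem splits into `D` matchings. The
broadcasts of each output are then placed, by Hall's theorem, in slots where their input and
their output are both idle or in `D - m` extra slots: broadcasts at different outputs never
conflict, and the clique inequalities give Hall's condition. -/

open Finset Filter Topology

section StablePolytopes

variable {V : Type*}

lemma isCompact_STAB [Finite V] (G : SimpleGraph V) : IsCompact (STAB G) := by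
  refine Set.Finite.isCompact_convexHull (𝕜 := ℝ)
    ((Set.finite_range fun S : Set V => S.indicator fun _ => (1 : ℝ)).subset ?_)
  rintro x ⟨S, -, rfl⟩
  exact ⟨S, rfl⟩

lemma average_indicator_mem_STAB {ι : Type*} [Fintype ι] [Nonempty ι] [DecidableEq V]
    (G : SimpleGraph V) (S : ι → Finset V) (hS : ∀ g, ∀ v ∈ S g, ∀ w ∈ S g, ¬ G.Adj v w) :
    (fun v => (#{g | v ∈ S g} : ℝ) / Fintype.card ι) ∈ STAB G := by
  have hw : ∑ _g : ι, (1 / Fintype.card ι : ℝ) = 1 := by simp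
  unfold STAB
  convert (convex_convexHull ℝ _).sum_mem (t := univ)
    (z := fun g => (S g : Set V).indicator fun _ => (1 : ℝ)) (fun _ _ => by positivity) hw
    (fun g _ => subset_convexHull ℝ _ ?_) using 1
  · funext v
    simp only [Finset.sum_apply, Pi.smul_apply, Set.indicator_apply, mem_coe, smul_eq_mul,
      mul_ite, mul_one, mul_zero]
    rw [← Finset.sum_filter, sum_const, nsmul_eq_mul, div_eq_mul_one_div]
  · exact ⟨S g, hS g, rfl⟩

lemma sum_floor_mul_le_of_mem_QSTAB {G : SimpleGraph V} {x : V → ℝ} (hx : x ∈ QSTAB G) (d : ℕ)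
    {Q : Finset V} (hQ : G.IsClique (Q : Set V)) : ∑ v ∈ Q, ⌊x v * d⌋₊ ≤ d := by
  have : (∑ v ∈ Q, ⌊x v * d⌋₊ : ℝ) ≤ d := calc
    _ ≤ ∑ v ∈ Q, x v * d :=
      sum_le_sum fun v _ => Nat.floor_le (mul_nonneg (hx.1 v) d.cast_nonneg)
    _ = (∑ v ∈ Q, x v) * d := (sum_mul ..).symm
    _ ≤ d := mul_le_of_le_one_left d.cast_nonneg (hx.2 Q hQ)
  exact_mod_cast this

/-- `x ∈ QSTAB G` is the limit of the points `⌊d n • x⌋ / d n`. -/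
theorem QSTAB_subset_of_natCast_div_mem (G : SimpleGraph V) {C : Set (V → ℝ)} (hC : IsClosed C)
    {d : ℕ → ℕ} (hd : Tendsto d atTop atTop)
    (h : ∀ n (c : V → ℕ), (∀ Q : Finset V, G.IsClique (Q : Set V) → ∑ v ∈ Q, c v ≤ d n) →
      (fun v => (c v : ℝ) / d n) ∈ C) :
    QSTAB G ⊆ C := by
  intro x hx
  refine hC.mem_of_tendsto (b := atTop) (f := fun n v => (⌊x v * d n⌋₊ : ℝ) / d n) ?_
    (Eventually.of_forall fun n => h n _ fun Q hQ => sum_floor_mul_le_of_mem_QSTAB hx (d n) hQ)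
  exact tendsto_pi_nhds.2 fun v =>
    (tendsto_nat_floor_mul_div_atTop (hx.1 v)).comp (tendsto_natCast_atTop_atTop.comp hd)

end StablePolytopes

section Birkhoff

variable {V : Type*} [Fintype V] [DecidableEq V]

/-- Hall's condition: `s` rows carry mass `d * #s`, all of it inside the columns they meet, each
of which carries mass `d`. -/
lemma exists_perm_forall_pos_of_sum_eq {d : ℕ} (hd : 0 < d) (M : V → V → ℕ)
    (hr : ∀ v, ∑ w, M v w = d) (hc : ∀ w, ∑ v, M v w = d) :
    ∃ π : Equiv.Perm V, ∀ v, 0 < M v (π v) := by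
  have hall (s : Finset V) : #s ≤ #(s.biUnion fun v => {w | 0 < M v w}) := by
    set B := s.biUnion fun v => {w | 0 < M v w}
    have hrowB (v) (hv : v ∈ s) : ∑ w ∈ B, M v w = d := by
      rw [← hr v]
      refine sum_subset (subset_univ _) fun w _ hw => ?_
      by_contra h
      exact hw (mem_biUnion.2 ⟨v, hv, by simpa [Nat.pos_iff_ne_zero] using h⟩)
    refine Nat.le_of_mul_le_mul_left ?_ hd
    calc d * #s = ∑ v ∈ s, ∑ w ∈ B, M v w := by
          rw [sum_congr rfl hrowB, sum_const, smul_eq_mul, mul_comm]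
      _ = ∑ w ∈ B, ∑ v ∈ s, M v w := sum_comm
      _ ≤ ∑ w ∈ B, ∑ v, M v w := sum_le_sum fun w _ => sum_le_sum_of_subset (subset_univ s)
      _ = d * #B := by rw [sum_congr rfl fun w _ => hc w, sum_const, smul_eq_mul, mul_comm]
  obtain ⟨f, hf, hfM⟩ := (all_card_le_biUnion_card_iff_exists_injective _).1 hall
  exact ⟨Equiv.ofBijective f (Finite.injective_iff_bijective.1 hf), fun v => by simpa using hfM v⟩

/-- The integer Birkhoff–von Neumann theorem. -/
theorem exists_perms_card_eq_of_sum_eq (D : ℕ) (M : V → V → ℕ)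
    (hr : ∀ v, ∑ w, M v w = D) (hc : ∀ w, ∑ v, M v w = D) :
    ∃ σ : Fin D → Equiv.Perm V, ∀ v w, #{t | σ t v = w} = M v w := by
  induction D generalizing M with
  | zero =>
    refine ⟨Fin.elim0, fun v w => ?_⟩
    have := (sum_eq_zero_iff.1 (hr v)) w (mem_univ w)
    simp [this]
  | succ d ih =>
    obtain ⟨π, hπ⟩ := exists_perm_forall_pos_of_sum_eq d.succ_pos M hr hc
    set M' : V → V → ℕ := fun v w => M v w - if π v = w then 1 else 0
    have hM (v w) : M v w = M' v w + if π v = w then 1 else 0 := by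
      have := hπ v
      by_cases h : π v = w
      · subst h; simp only [M', if_true]; omega
      · simp [M', h]
    obtain ⟨σ, hσ⟩ := ih M' (fun v => by simpa [hM, sum_add_distrib] using hr v)
      (fun w => by simpa [hM, sum_add_distrib, ← Equiv.eq_symm_apply] using hc w)
    refine ⟨Fin.cons π σ, fun v w => ?_⟩
    rw [Fin.card_filter_univ_succ]
    simp only [Fin.cons_zero, Fin.cons_succ, hσ, hM v w]
    split_ifs <;> rfl

end Birkhoff

section BipartiteSchedule

variable {α β : Type*} [Fintype α] [Fintype β] [DecidableEq α] [DecidableEq β]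

/-- Kőnig's edge-colouring theorem for a bipartite multigraph given by its multiplicity matrix
`u`: padding `u` with diagonal blocks to a symmetric matrix with all line sums `D`, each
permutation of the Birkhoff decomposition restricts to a matching. -/
theorem exists_perms_card_eq_of_sum_le (D : ℕ) (u : α → β → ℕ)
    (hrow : ∀ a, ∑ b, u a b ≤ D) (hcol : ∀ b, ∑ a, u a b ≤ D) :
    ∃ σ : Fin D → Equiv.Perm (α ⊕ β), ∀ a b, #{t | σ t (.inl a) = .inr b} = u a b := by
  let M : α ⊕ β → α ⊕ β → ℕ
    | .inl a, .inl a' => if a = a' then D - ∑ b, u a b else 0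
    | .inl a, .inr b => u a b
    | .inr b, .inl a => u a b
    | .inr b, .inr b' => if b = b' then D - ∑ a, u a b else 0
  have hr : ∀ v, ∑ w, M v w = D := by
    rintro (a | b)
    · simp [M, Fintype.sum_sum_type]; have := hrow a; omega
    · simp [M, Fintype.sum_sum_type]; have := hcol b; omega
  have hsymm : ∀ v w, M v w = M w v := by
    rintro (a | b) (a' | b') <;> simp only [M] <;> split_ifs <;> simp_all [eq_comm]
  obtain ⟨σ, hσ⟩ := exists_perms_card_eq_of_sum_eq D M hr fun w => by simp_rw [hsymm _ w, hr]
  exact ⟨σ, fun a b => hσ _ _⟩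

def idleSlots {D : ℕ} (σ : Fin D → Equiv.Perm (α ⊕ β)) (a : α) (b : β) : Finset (Fin D) :=
  {t | (∀ a', σ t (.inl a') ≠ .inr b) ∧ ∀ b', σ t (.inl a) ≠ .inr b'}

/-- The slots serving `(a, b)` are counted twice on the right. -/
lemma card_idleSlots_add_ge {D : ℕ} (σ : Fin D → Equiv.Perm (α ⊕ β)) (a : α) (b : β) :
    D + #{t | σ t (.inl a) = .inr b} ≤ #(idleSlots σ a b) +
      ∑ a', #{t | σ t (.inl a') = .inr b} + ∑ b', #{t | σ t (.inl a) = .inr b'} := by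
  set X : Finset (Fin D) := {t | ∃ a', σ t (.inl a') = .inr b}
  set Y : Finset (Fin D) := {t | ∃ b', σ t (.inl a) = .inr b'}
  have hcompl : #(idleSlots σ a b) + #(X ∪ Y) = D := by
    have := card_filter_add_card_filter_not (s := univ) (p := fun t : Fin D => t ∈ X ∪ Y)
    rw [filter_mem_eq_inter, univ_inter, card_univ, Fintype.card_fin] at this
    convert this using 1
    rw [add_comm]
    congr 2
    ext t
    simp [idleSlots, X, Y]
  have hinter : #{t | σ t (.inl a) = .inr b} ≤ #(X ∩ Y) :=
    card_le_card fun t ht => by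
      simp only [X, Y, mem_inter, mem_filter, mem_univ, true_and] at ht ⊢
      exact ⟨⟨a, ht⟩, ⟨b, ht⟩⟩
  have hX : #X ≤ ∑ a', #{t | σ t (.inl a') = .inr b} :=
    (card_le_card fun t ht => by simpa [X] using ht).trans card_biUnion_le
  have hY : #Y ≤ ∑ b', #{t | σ t (.inl a) = .inr b'} :=
    (card_le_card fun t ht => by simpa [Y] using ht).trans card_biUnion_le
  have := card_union_add_card_inter X Y
  omega

end BipartiteSchedule

/-- Hall's theorem with multiplicities `b i`, and with `e` slots open to every `i`. -/
theorem exists_injective_sigma_of_sum_le {ι α : Type*} [DecidableEq ι] [DecidableEq α]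
    (b : ι → ℕ) (E : ι → Finset α) (e : ℕ)
    (h : ∀ B : Finset ι, B.Nonempty → ∑ i ∈ B, b i ≤ #(B.biUnion E) + e) :
    ∃ F : (Σ i, Fin (b i)) → α ⊕ Fin e,
      Function.Injective F ∧ ∀ x, F x ∈ (E x.1).disjSum univ := by
  refine (all_card_le_biUnion_card_iff_exists_injective _).1 fun A => ?_
  obtain rfl | hA := A.eq_empty_or_nonempty
  · simp
  set B := A.image Sigma.fst
  have hAB : #A ≤ ∑ i ∈ B, b i := calc
    #A ≤ #(B.sigma fun i => (univ : Finset (Fin (b i)))) :=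
      card_le_card fun x hx => mem_sigma.2 ⟨mem_image_of_mem Sigma.fst hx, mem_univ _⟩
    _ = ∑ i ∈ B, b i := by simp
  have hsub : (B.biUnion E).disjSum (univ : Finset (Fin e)) ⊆
      A.biUnion fun x => (E x.1).disjSum univ := by
    obtain ⟨x₀, hx₀⟩ := hA
    rintro (a | k) h
    · obtain ⟨i, hi, ha⟩ := mem_biUnion.1 (inl_mem_disjSum.1 h)
      obtain ⟨x, hx, rfl⟩ := mem_image.1 hi
      exact mem_biUnion.2 ⟨x, hx, inl_mem_disjSum.2 ha⟩
    · exact mem_biUnion.2 ⟨x₀, hx₀, inr_mem_disjSum.2 (mem_univ k)⟩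
  calc #A ≤ #(B.biUnion E) + e := hAB.trans (h B (hA.image _))
    _ = #((B.biUnion E).disjSum univ) := by simp
    _ ≤ _ := card_le_card hsub

/-- Hall's condition for the broadcasts of one output: input `i` has `g i` unicasts to it,
`R i` unicasts in all and `b i` broadcasts to it, and `e` bounds the slots idle for `B`. If some
input of `B` has few unicasts, the column bound suffices; otherwise each input of `B` has demand
below `m` at this output. -/
lemma sum_add_le_of_card_idle_ge {ι : Type*} [Fintype ι] [DecidableEq ι] (m e : ℕ) (g b R : ι → ℕ)
    {B : Finset ι} (hB : B.Nonempty)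
    (hcol : ∑ i, (g i + b i) ≤ Fintype.card ι * m) (hrow : ∀ i, R i + b i ≤ Fintype.card ι * m)
    (he : ∀ i ∈ B, Fintype.card ι * m + g i ≤ e + ∑ i', g i' + R i) :
    ∑ i ∈ B, b i + m ≤ e + Fintype.card ι * m := by
  have hBle : ∑ i ∈ B, b i ≤ ∑ i, b i := sum_le_sum_of_subset (subset_univ B)
  rw [sum_add_distrib] at hcol
  by_cases hfew : ∃ i₀ ∈ B, R i₀ + m ≤ Fintype.card ι * m + g i₀
  · obtain ⟨i₀, hi₀, hR⟩ := hfew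
    have := he i₀ hi₀
    omega
  push Not at hfew
  have hlt (i) (hi : i ∈ B) : b i + g i < m := by have := hfew i hi; have := hrow i; omega
  by_cases hBu : B = univ
  · subst hBu
    obtain ⟨i₀, -⟩ := hB
    have h₁ : ∑ i ∈ univ.erase i₀, (b i + g i) ≤ ∑ i ∈ univ.erase i₀, m :=
      sum_le_sum fun i _ => (hlt i (mem_univ i)).le
    have hb := add_sum_erase univ b (mem_univ i₀)
    have hg := add_sum_erase univ g (mem_univ i₀)
    have hm := add_sum_erase univ (fun _ => m) (mem_univ i₀)
    have hm' : ∑ _i : ι, m = Fintype.card ι * m := by simp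
    rw [sum_add_distrib] at h₁
    have := he i₀ (mem_univ i₀)
    have := hrow i₀
    omega
  · have hcard : #B + 1 ≤ Fintype.card ι := card_lt_card (ssubset_univ_iff.2 hBu)
    calc ∑ i ∈ B, b i + m ≤ ∑ i ∈ B, m + m := by
          gcongr with i hi
          exact (Nat.le_add_right _ _).trans (hlt i hi).le
      _ = (#B + 1) * m := by rw [sum_const, smul_eq_mul, add_mul, one_mul]
      _ ≤ Fintype.card ι * m := Nat.mul_le_mul_right m hcard
      _ ≤ e + Fintype.card ι * m := Nat.le_add_left _ _

theorem exists_broadcast_placement {K N m : ℕ} (u b : Fin K → Fin N → ℕ)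
    (hrow : ∀ i j, ∑ j', u i j' + b i j ≤ K * m) (hcol : ∀ j, ∑ i, (u i j + b i j) ≤ K * m)
    (σ : Fin (K * m) → Equiv.Perm (Fin K ⊕ Fin N))
    (hσ : ∀ i j, #{t | σ t (.inl i) = .inr j} = u i j) (j : Fin N) :
    ∃ F : (Σ i, Fin (b i j)) → Fin (K * m) ⊕ Fin (K * m - m),
      Function.Injective F ∧ ∀ x, F x ∈ (idleSlots σ x.1 j).disjSum univ := by
  refine exists_injective_sigma_of_sum_le (b · j) (idleSlots σ · j) _ fun B hB => ?_
  have := sum_add_le_of_card_idle_ge (ι := Fin K) m #(B.biUnion (idleSlots σ · j))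
    (u · j) (b · j) (fun i => ∑ j', u i j') hB (by simpa using hcol j)
    (fun i => by simpa using hrow i j)
    fun i hi => by
      have h₁ : K * m + u i j ≤ #(idleSlots σ i j) + ∑ i', u i' j + ∑ j', u i j' := by
        simpa only [hσ] using card_idleSlots_add_ge σ i j
      have h₂ := card_le_card (subset_biUnion_of_mem (idleSlots σ · j) hi)
      simp only [Fintype.card_fin] at h₁ h₂ ⊢
      omega
  simp only [Fintype.card_fin] at this
  omega

namespace ECG

variable {K N : ℕ}

lemma isClique_image_unicast (i : Fin K) :
    (ECG K N).IsClique ↑(univ.image fun j => ((false, i, j) : CGVert K N)) := by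
  intro v hv w hw hne
  simp only [coe_image, coe_univ, Set.image_univ, Set.mem_range] at hv hw
  obtain ⟨j, rfl⟩ := hv
  obtain ⟨j', rfl⟩ := hw
  exact ⟨hne, .inl ⟨rfl, .inl rfl⟩⟩

lemma isClique_insert_broadcast_image_unicast (i : Fin K) (j : Fin N) :
    (ECG K N).IsClique
      ↑(insert (true, i, j) (univ.image fun j' => ((false, i, j') : CGVert K N))) := by
  rw [coe_insert]
  refine (isClique_image_unicast i).insert fun w hw hne => ⟨hne, .inl ?_⟩
  simp only [coe_image, coe_univ, Set.image_univ, Set.mem_range] at hw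
  obtain ⟨j', rfl⟩ := hw
  exact ⟨rfl, .inr rfl⟩

lemma isClique_image_output (j : Fin N) :
    (ECG K N).IsClique ↑(univ.image fun p : Bool × Fin K => ((p.1, p.2, j) : CGVert K N)) := by
  intro v hv w hw hne
  simp only [coe_image, coe_univ, Set.image_univ, Set.mem_range] at hv hw
  obtain ⟨⟨β, i⟩, rfl⟩ := hv
  obtain ⟨⟨β', i'⟩, rfl⟩ := hw
  refine ⟨hne, ?_⟩
  by_cases hi : i = i'
  · subst hi
    cases β <;> cases β' <;> simp_all
  · exact .inr ⟨rfl, hi⟩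

section CliqueSums

variable {c : CGVert K N → ℕ} {D : ℕ}

lemma sum_unicast_le
    (hc : ∀ Q : Finset (CGVert K N), (ECG K N).IsClique (Q : Set _) → ∑ v ∈ Q, c v ≤ D)
    (i : Fin K) : ∑ j, c (false, i, j) ≤ D := by
  have := hc _ (isClique_image_unicast i)
  rwa [sum_image fun _ _ _ _ h => by simpa using h] at this

lemma sum_unicast_add_broadcast_le
    (hc : ∀ Q : Finset (CGVert K N), (ECG K N).IsClique (Q : Set _) → ∑ v ∈ Q, c v ≤ D)
    (i : Fin K) (j : Fin N) :
    ∑ j', c (false, i, j') + c (true, i, j) ≤ D := by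
  have := hc _ (isClique_insert_broadcast_image_unicast i j)
  rwa [sum_insert (by simp), sum_image fun _ _ _ _ h => by simpa using h, add_comm] at this

lemma sum_output_le
    (hc : ∀ Q : Finset (CGVert K N), (ECG K N).IsClique (Q : Set _) → ∑ v ∈ Q, c v ≤ D)
    (j : Fin N) : ∑ i, (c (false, i, j) + c (true, i, j)) ≤ D := by
  have := hc _ (isClique_image_output j)
  rw [sum_image fun p _ q _ h => by simpa [Prod.ext_iff] using h,
    Fintype.sum_prod_type_right] at this
  simpa [add_comm] using this

end CliqueSums

lemma forall_not_adj_of {S : Set (CGVert K N)}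
    (huu : ∀ i i' j j', (false, i, j) ∈ S → (false, i', j') ∈ S → (i = i' ↔ j = j'))
    (hbb : ∀ i i' j, (true, i, j) ∈ S → (true, i', j) ∈ S → i = i')
    (hbu : ∀ i i' j j', (true, i, j) ∈ S → (false, i', j') ∈ S → i ≠ i' ∧ j ≠ j') :
    ∀ v ∈ S, ∀ w ∈ S, ¬ (ECG K N).Adj v w := by
  rintro ⟨_ | _, i, j⟩ hv ⟨_ | _, i', j'⟩ hw ⟨hne, h⟩
  · have := huu _ _ _ _ hv hw
    simp only [ne_eq, Prod.mk.injEq, true_and] at hne h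
    tauto
  · have := hbu _ _ _ _ hw hv
    simp only [ne_eq] at h
    tauto
  · have := hbu _ _ _ _ hv hw
    simp only [ne_eq] at h
    tauto
  · rcases h with ⟨-, h | h⟩ | ⟨rfl, hi⟩
    · exact Bool.noConfusion h
    · exact Bool.noConfusion h
    · exact hi (hbb _ _ _ hv hw)

theorem exists_stable_schedule (m : ℕ) (u b : Fin K → Fin N → ℕ)
    (hu : ∀ i, ∑ j, u i j ≤ K * m) (hrow : ∀ i j, ∑ j', u i j' + b i j ≤ K * m)
    (hcol : ∀ j, ∑ i, (u i j + b i j) ≤ K * m) :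
    ∃ S : Fin (K * m) ⊕ Fin (K * m - m) → Finset (CGVert K N),
      (∀ g, ∀ v ∈ S g, ∀ w ∈ S g, ¬ (ECG K N).Adj v w) ∧
      (∀ i j, #{g | (false, i, j) ∈ S g} = u i j) ∧ (∀ i j, #{g | (true, i, j) ∈ S g} = b i j) := by
  obtain ⟨σ, hσ⟩ := exists_perms_card_eq_of_sum_le (K * m) u hu fun j =>
    (sum_le_sum fun i _ => Nat.le_add_right _ _).trans (hcol j)
  have hF := exists_broadcast_placement u b hrow hcol σ hσ
  choose F hFinj hFidle using hF
  let S (g : Fin (K * m) ⊕ Fin (K * m - m)) : Finset (CGVert K N) :=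
    {v | if v.1 then ∃ c, F v.2.2 ⟨v.2.1, c⟩ = g
      else ∃ t, g = .inl t ∧ σ t (.inl v.2.1) = .inr v.2.2}
  refine ⟨S, fun g => forall_not_adj_of ?_ ?_ ?_, fun i j => ?_, fun i j => ?_⟩
  · simp only [S, coe_filter, mem_univ, true_and, Set.mem_ofPred_eq, Bool.false_eq_true, if_false]
    rintro i i' j j' ⟨t, rfl, ht⟩ ⟨t', ht', ht'σ⟩
    obtain rfl := Sum.inl_injective ht'
    constructor
    · rintro rfl; exact Sum.inr_injective (ht.symm.trans ht'σ)
    · rintro rfl; exact Sum.inl_injective ((σ t).injective (ht.trans ht'σ.symm))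
  · simp only [S, coe_filter, mem_univ, true_and, Set.mem_ofPred_eq, if_true]
    rintro i i' j ⟨c, rfl⟩ ⟨c', hc'⟩
    exact congrArg Sigma.fst (hFinj j hc'.symm)
  · simp only [S, coe_filter, mem_univ, true_and, Set.mem_ofPred_eq, if_true,
      Bool.false_eq_true, if_false]
    rintro i i' j j' ⟨c, rfl⟩ ⟨t, ht, hσt⟩
    have hidle := hFidle j ⟨i, c⟩
    simp only [ht, inl_mem_disjSum, idleSlots, mem_filter, mem_univ, true_and] at hidle
    exact ⟨fun h => hidle.2 j' (h ▸ hσt), fun h => hidle.1 i' (h ▸ hσt)⟩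
  · calc #{g | (false, i, j) ∈ S g}
        = #(({t | σ t (.inl i) = .inr j} : Finset _).map .inl) := by
          congr 1
          ext (t | t) <;> simp [S]
      _ = u i j := by rw [card_map, hσ]
  · calc #{g | (true, i, j) ∈ S g} = #(univ.image fun c => F j ⟨i, c⟩) := by
          congr 1
          ext g
          simp [S]
      _ = b i j := by
          rw [card_image_of_injective _ fun c c' h => by simpa using hFinj j h]
          simp

theorem natCast_div_mem_smul_STAB {m : ℕ} (hK : 0 < K) (hm : 0 < m) (c : CGVert K N → ℕ)
    (hc : ∀ Q : Finset (CGVert K N), (ECG K N).IsClique (Q : Set _) → ∑ v ∈ Q, c v ≤ K * m) :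
    (fun v => (c v : ℝ) / (K * m : ℕ)) ∈ ((2 * K - 1 : ℝ) / K) • STAB (ECG K N) := by
  obtain ⟨S, hS, hu, hb⟩ := exists_stable_schedule m (fun i j => c (false, i, j))
    (fun i j => c (true, i, j)) (sum_unicast_le hc) (sum_unicast_add_broadcast_le hc)
    (sum_output_le hc)
  have hKm : m ≤ K * m := Nat.le_mul_of_pos_left m hK
  have : Nonempty (Fin (K * m) ⊕ Fin (K * m - m)) := ⟨.inl ⟨0, hm.trans_le hKm⟩⟩
  have hcount : ∀ v, #{g | v ∈ S g} = c v := by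
    rintro ⟨_ | _, i, j⟩
    exacts [hu i j, hb i j]
  refine ⟨_, average_indicator_mem_STAB _ S hS, funext fun v => ?_⟩
  have hK' : (K : ℝ) ≠ 0 := by positivity
  have hm' : (m : ℝ) ≠ 0 := by positivity
  have h2K : (2 * K - 1 : ℝ) ≠ 0 := by
    have : (1 : ℝ) ≤ K := by exact_mod_cast hK
    linarith
  simp only [hcount, Pi.smul_apply, smul_eq_mul, Fintype.card_sum, Fintype.card_fin]
  push_cast [Nat.cast_sub hKm]
  rw [show (K * m + (K * m - m) : ℝ) = (2 * K - 1) * m by ring]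
  field_simp

end ECG

theorem stmt0_general (K N : ℕ) (hK : 0 < K) :
    QSTAB (ECG K N) ⊆ ((2 * K - 1 : ℝ) / K) • STAB (ECG K N) :=
  QSTAB_subset_of_natCast_div_mem _ ((isCompact_STAB _).smul _).isClosed
    (d := fun n => K * (n + 1))
    (tendsto_atTop_mono (fun n => (Nat.le_succ n).trans (Nat.le_mul_of_pos_left _ hK)) tendsto_id)
    fun n c hc => ECG.natCast_div_mem_smul_STAB hK n.succ_pos c hc

theorem stmt0 (K N : ℕ) (hK : 0 < K) (hN : 0 < N) :
    QSTAB (ECG K N) ⊆ ((2 * K - 1 : ℝ) / K) • STAB (ECG K N) :=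
  stmt0_general K N hK
end

section
/- For all positive integers K and N and every i ∈ {1,…,K}, the subgraph of the enhanced conflict graph G_{K,N} induced by the vertex set consisting of all broadcast vertices b_{jk} (j ∈ {1,…,K}, k ∈ {1,…,N}) together with the unicast vertices u_{ij} (j ∈ {1,…,N}) from input i is a perfect graph. -/
open SimpleGraph Pointwise

/-!
Order the vertices by a rank: broadcasts of inputs other than `i` first, then the broadcasts of
input `i`, then the unicasts of input `i`. The neighbours of a vertex with rank at least its own
form a clique: for a broadcast `b_{jk}` with `j ≠ i` they all lie at output `k`, and otherwise
they are unicasts of input `i`. A graph with such a perfect elimination ranking, and each of its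
induced subgraphs, is coloured greedily from the last rank down with as many colours as its
clique number, so it is perfect.
-/

namespace SimpleGraph

variable {V W α : Type*} [LinearOrder α] {G : SimpleGraph V}

def IsPerfectEliminationRank (G : SimpleGraph V) (f : V → α) : Prop :=
  ∀ v, G.IsClique {w | G.Adj v w ∧ f v ≤ f w}

def IsColoringOn (G : SimpleGraph V) (n : ℕ) (s : Finset V) (c : V → ℕ) : Prop :=
  (∀ v ∈ s, c v < n) ∧ ∀ v ∈ s, ∀ w ∈ s, G.Adj v w → c v ≠ c w

lemma IsColoringOn.exists_insert [DecidableEq V] [DecidableRel G.Adj] {n : ℕ} {s : Finset V}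
    {c : V → ℕ} (hc : G.IsColoringOn n s c) {a : V} (ha : a ∉ s)
    (hdeg : ({w ∈ s | G.Adj a w} : Finset V).card < n) :
    ∃ c', G.IsColoringOn n (insert a s) c' := by
  obtain ⟨k, hk, hfree⟩ := Finset.exists_mem_notMem_of_card_lt_card
    (s := ({w ∈ s | G.Adj a w}).image c) (t := Finset.range n)
    (Finset.card_image_le.trans_lt (by simpa using hdeg))
  have hfree' : ∀ w ∈ s, G.Adj a w → c w ≠ k := fun w hw hadj h =>
    hfree (Finset.mem_image.mpr ⟨w, Finset.mem_filter.mpr ⟨hw, hadj⟩, h⟩)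
  have hupdate : ∀ w ∈ s, Function.update c a k w = c w := fun w hw =>
    Function.update_of_ne (ne_of_mem_of_not_mem hw ha) _ _
  refine ⟨Function.update c a k, ?_, ?_⟩
  · intro v hv
    rcases Finset.mem_insert.mp hv with rfl | hv
    · simpa using hk
    · rw [hupdate v hv]; exact hc.1 v hv
  · intro v hv w hw hadj
    rcases Finset.mem_insert.mp hv with rfl | hvs <;> rcases Finset.mem_insert.mp hw with rfl | hws
    · exact (G.irrefl hadj).elim
    · rw [hupdate w hws, Function.update_self]; exact (hfree' w hws hadj).symm
    · rw [hupdate v hvs, Function.update_self]; exact hfree' v hvs hadj.symm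
    · rw [hupdate v hvs, hupdate w hws]; exact hc.2 v hvs w hws hadj

namespace IsPerfectEliminationRank

variable {f : V → α}

lemma comap {H : SimpleGraph W} (φ : H ↪g G) (hf : G.IsPerfectEliminationRank f) :
    H.IsPerfectEliminationRank (f ∘ φ) := fun v _ ha _ hb hab =>
  φ.map_adj_iff.mp <| hf (φ v) ⟨φ.map_adj_iff.mpr ha.1, ha.2⟩ ⟨φ.map_adj_iff.mpr hb.1, hb.2⟩
    (φ.injective.ne hab)

lemma colorable [Finite V] (hf : G.IsPerfectEliminationRank f) : G.Colorable G.cliqueNum := by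
  classical
  have := Fintype.ofFinite V
  suffices ∀ s : Finset V, ∃ c, G.IsColoringOn G.cliqueNum s c by
    obtain ⟨c, hlt, hc⟩ := this Finset.univ
    exact (colorable_iff_exists_bdd_nat_coloring _).mpr
      ⟨Coloring.mk c fun h => hc _ (Finset.mem_univ _) _ (Finset.mem_univ _) h,
        fun v => hlt v (Finset.mem_univ v)⟩
  intro s
  induction s using Finset.induction_on_min_value f with
  | empty => exact ⟨0, by simp [IsColoringOn]⟩
  | insert a s ha hmin ih =>
    obtain ⟨c, hc⟩ := ih
    -- `a` has minimal rank in `insert a s`, so its neighbours in `s` are later neighbours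
    have hclique : G.IsClique (insert a {w ∈ s | G.Adj a w} : Finset V) := by
      rw [Finset.coe_insert]
      refine ((hf a).subset fun w hw => ?_).insert fun w hw _ => ?_ <;>
        simp only [Finset.coe_filter, Set.mem_ofPred_eq] at hw
      · exact ⟨hw.2, hmin w hw.1⟩
      · exact hw.2
    have hcard := hclique.card_le_cliqueNum
    rw [Finset.card_insert_of_notMem fun h => ha (Finset.mem_filter.mp h).1] at hcard
    exact hc.exists_insert ha hcard

lemma isPerfect [Finite V] (hf : G.IsPerfectEliminationRank f) : G.IsPerfect := fun S =>
  le_antisymm (hf.comap (Embedding.induce S)).colorable.chromaticNumber_le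
    cliqueNum_le_chromaticNumber

end IsPerfectEliminationRank

end SimpleGraph

namespace ECG

variable {K N : ℕ}

lemma adj_of_output_eq {v w : CGVert K N} (hne : v ≠ w) (hout : v.2.2 = w.2.2) :
    (ECG K N).Adj v w := by
  refine ⟨hne, ?_⟩
  obtain ⟨bv, jv, kv⟩ := v
  obtain ⟨bw, jw, kw⟩ := w
  simp only at hout ⊢
  subst hout
  by_cases hin : jv = jw
  · subst hin
    cases bv <;> cases bw <;> simp_all
  · exact Or.inr ⟨rfl, hin⟩

def rank (i : Fin K) (v : CGVert K N) : ℕ :=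
  if v.1 = false then 2 else if v.2.1 = i then 1 else 0

lemma output_eq_of_adj {i : Fin K} {v w : CGVert K N} (hvb : v.1 = true) (hvi : v.2.1 ≠ i)
    (hw : w.1 = true ∨ w.2.1 = i) (hadj : (ECG K N).Adj v w) : w.2.2 = v.2.2 := by
  obtain ⟨bv, jv, kv⟩ := v
  obtain ⟨bw, jw, kw⟩ := w
  simp only [ECG] at *
  grind

lemma unicast_of_adj_of_rank_le {i : Fin K} {v w : CGVert K N} (hvi : v.2.1 = i)
    (hw : w.1 = true ∨ w.2.1 = i) (hadj : (ECG K N).Adj v w) (hle : rank i v ≤ rank i w) :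
    w.1 = false ∧ w.2.1 = i := by
  obtain ⟨bv, jv, kv⟩ := v
  obtain ⟨bw, jw, kw⟩ := w
  simp only [ECG, rank] at *
  grind

lemma isPerfectEliminationRank_rank (i : Fin K) :
    ((ECG K N).induce {v : CGVert K N | v.1 = true ∨ v.2.1 = i}).IsPerfectEliminationRank
      (rank i ∘ Subtype.val) := by
  rintro ⟨v, hv⟩ ⟨w₁, hw₁⟩ ⟨hadj₁, hle₁⟩ ⟨w₂, hw₂⟩ ⟨hadj₂, hle₂⟩ hne
  replace hne : w₁ ≠ w₂ := fun h => hne (Subtype.ext h)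
  by_cases hvi : v.2.1 = i
  · obtain ⟨hb₁, hi₁⟩ := unicast_of_adj_of_rank_le hvi hw₁ hadj₁ hle₁
    obtain ⟨-, hi₂⟩ := unicast_of_adj_of_rank_le hvi hw₂ hadj₂ hle₂
    exact ⟨hne, Or.inl ⟨hi₁.trans hi₂.symm, Or.inl hb₁⟩⟩
  · have hvb : v.1 = true := hv.resolve_right hvi
    exact adj_of_output_eq hne
      ((output_eq_of_adj hvb hvi hw₁ hadj₁).trans (output_eq_of_adj hvb hvi hw₂ hadj₂).symm)

end ECG

theorem stmt5_general (K N : ℕ) (i : Fin K) :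
    ((ECG K N).induce {v : CGVert K N | v.1 = true ∨ v.2.1 = i}).IsPerfect :=
  (ECG.isPerfectEliminationRank_rank i).isPerfect

theorem stmt5 (K N : ℕ) (hK : 0 < K) (hN : 0 < N) (i : Fin K) :
    ((ECG K N).induce {v : CGVert K N | v.1 = true ∨ v.2.1 = i}).IsPerfect :=
  stmt5_general K N i
end

section
/- Fix positive integers K, N and i ∈ {1,…,K}, and let G_i be the subgraph of the enhanced conflict graph G_{K,N} induced by all broadcast vertices together with the unicast vertices u_{ij} (j ∈ {1,…,N}) from input i. Then every induced cycle of odd length at least 5 in G_i contains no broadcast vertex b_{jk} with j ≠ i; equivalently, its vertices all lie in B_i ∪ U_i = {b_{ij} : j} ∪ {u_{ij} : j}. -/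
open SimpleGraph Pointwise

/-! A broadcast vertex `b_{jk}` with `j ≠ i` has no unicast neighbour in `G_i`, since the only
unicasts there come from input `i`. All its neighbours therefore sit at output `k`, and any two
distinct vertices at the same output are adjacent, so its neighbourhood is a clique. In a chordless
cycle of length at least `4` the two neighbours of a vertex are non-adjacent. -/

namespace SimpleGraph

variable {V W : Type*} {G : SimpleGraph V} {H : SimpleGraph W}

open Fin.CommRing in
theorem cycleGraph_not_isClique_neighborSet {n : ℕ} (hn : 4 ≤ n) (v : Fin n) :
    ¬ (cycleGraph n).IsClique ((cycleGraph n).neighborSet v) := by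
  obtain ⟨m, rfl⟩ : ∃ m, n = m + 2 := ⟨n - 2, by omega⟩
  have ne_zero (k : ℕ) (hk0 : 0 < k) (hk : k < m + 2) : (k : Fin (m + 2)) ≠ 0 := by
    simp [Fin.ext_iff, Nat.mod_eq_of_lt hk, hk0.ne']
  rw [cycleGraph_neighborSet, isClique_pair, cycleGraph_adj]
  intro h
  rcases h (fun h' => ne_zero 2 (by omega) (by omega) (by push_cast; linear_combination -h'))
    with h' | h'
  · exact ne_zero 3 (by omega) (by omega) (by push_cast; linear_combination -h')
  · exact ne_zero 1 (by omega) (by omega) (by push_cast; linear_combination h')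

theorem Iso.isClique_neighborSet (φ : G ≃g H) {v : V} (h : G.IsClique (G.neighborSet v)) :
    H.IsClique (H.neighborSet (φ v)) := by
  rw [← φ.image_neighborSet]
  rintro _ ⟨a, ha, rfl⟩ _ ⟨b, hb, rfl⟩ hab
  exact φ.map_adj_iff.mpr (h ha hb (ne_of_apply_ne φ hab))

theorem IsClique.induce_neighborSet {v : V} (h : G.IsClique (G.neighborSet v)) {s : Set V}
    (hv : v ∈ s) : (G.induce s).IsClique ((G.induce s).neighborSet ⟨v, hv⟩) := by
  rw [isClique_induce_iff]
  refine h.subset ?_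
  rintro _ ⟨w, hw, rfl⟩
  exact hw

end SimpleGraph

namespace ECG

variable {K N : ℕ}

theorem adj_of_output_eq_s9 {x y : CGVert K N} (hxy : x ≠ y) (h : x.2.2 = y.2.2) :
    (ECG K N).Adj x y := by
  refine ⟨hxy, ?_⟩
  by_cases hin : x.2.1 = y.2.1
  · refine Or.inl ⟨hin, ?_⟩
    have : x.1 ≠ y.1 := fun h1 => hxy (Prod.ext h1 (Prod.ext hin h))
    cases hx : x.1 <;> cases hy : y.1 <;> simp_all
  · exact Or.inr ⟨h, hin⟩

theorem output_eq_of_adj_broadcast {v x : CGVert K N} (hv : v.1 = true) (hvx : (ECG K N).Adj v x)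
    (hx : x.1 = true ∨ x.2.1 ≠ v.2.1) : x.2.2 = v.2.2 := by
  obtain ⟨-, ⟨hin, hu⟩ | ⟨hout, -⟩⟩ := hvx
  · simp_all
  · exact hout.symm

def broadcastOrInput (i : Fin K) : Set (CGVert K N) := {v | v.1 = true ∨ v.2.1 = i}

theorem isClique_induce_neighborSet {i : Fin K} (v : ↥(broadcastOrInput (N := N) i))
    (hvi : (v : CGVert K N).2.1 ≠ i) :
    ((ECG K N).induce (broadcastOrInput i)).IsClique
      (((ECG K N).induce (broadcastOrInput i)).neighborSet v) := by
  have hv : (v : CGVert K N).1 = true := v.2.resolve_right hvi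
  have output_eq (x : ↥(broadcastOrInput (N := N) i))
      (hx : ((ECG K N).induce (broadcastOrInput i)).Adj v x) :
      (x : CGVert K N).2.2 = (v : CGVert K N).2.2 :=
    output_eq_of_adj_broadcast hv hx (x.2.imp_right fun h => h.trans_ne hvi.symm)
  intro x hx y hy hxy
  exact adj_of_output_eq_s9 (Subtype.coe_ne_coe.mpr hxy) ((output_eq x hx).trans (output_eq y hy).symm)

end ECG

theorem stmt9_general (K N : ℕ) (i : Fin K)
    (n : ℕ) (hn : 5 ≤ n)
    (S : Set ↥{v : CGVert K N | v.1 = true ∨ v.2.1 = i})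
    (hiso : Nonempty
      (((ECG K N).induce {v : CGVert K N | v.1 = true ∨ v.2.1 = i}).induce S ≃g cycleGraph n)) :
    ∀ v ∈ S, (↑v : CGVert K N).2.1 = i := by
  intro v hv
  by_contra hvi
  obtain ⟨φ⟩ := hiso
  exact cycleGraph_not_isClique_neighborSet (by omega) (φ ⟨v, hv⟩)
    (φ.isClique_neighborSet ((ECG.isClique_induce_neighborSet v hvi).induce_neighborSet hv))

theorem stmt9 (K N : ℕ) (hK : 0 < K) (hN : 0 < N) (i : Fin K)
    (n : ℕ) (hn : 5 ≤ n) (hodd : Odd n)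
    (S : Set ↥{v : CGVert K N | v.1 = true ∨ v.2.1 = i})
    (hiso : Nonempty
      (((ECG K N).induce {v : CGVert K N | v.1 = true ∨ v.2.1 = i}).induce S ≃g cycleGraph n)) :
    ∀ v ∈ S, (↑v : CGVert K N).2.1 = i :=
  stmt9_general K N i n hn S hiso
end

section
/- Fix positive integers K, N and i ∈ {1,…,K}, and let G_i be the subgraph of the enhanced conflict graph G_{K,N} induced by all broadcast vertices together with the unicast vertices u_{ij} (j ∈ {1,…,N}) from input i. Then the complement graph of G_i contains no induced cycle of odd length at least 5; that is, G_i contains no odd anti-hole. -/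
open SimpleGraph Pointwise

/-!
In the complement `H` of `G_i`, adjacent vertices have different outputs, two broadcast vertices
with different outputs are adjacent, and the unicast vertices (all from input `i`) are pairwise
non-adjacent. Let `v₀, …, v_{n-1}` be an odd hole of `H`. A unicast `v_c` has broadcast neighbours
`v_{c ± 1}`, and `v_{c+2}` must be unicast too: otherwise `v_{c-1}` is non-adjacent to both
`v_{c+1}` and `v_{c+2}`, so all three share one output, although `v_{c+1} ~ v_{c+2}`. As `n` is
odd, steps of `2` reach the whole cycle, so every `v_c` is unicast, which is absurd. If instead
all `v_c` are broadcast, the non-adjacent `v_c`, `v_{c+2}` share their output, hence all outputs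
agree, contradicting any edge of the cycle.
-/

namespace SimpleGraph

variable {V W α : Type*}

theorem cycleGraph_adj_self_add {n : ℕ} {a k : Fin (n + 2)} :
    (cycleGraph (n + 2)).Adj a (a + k) ↔ k = -1 ∨ k = 1 := by
  rw [cycleGraph_adj, sub_add_cancel_left, add_sub_cancel_left, neg_eq_iff_eq_neg]

theorem cycleGraph_adj_self_add_one {n : ℕ} (a : Fin (n + 2)) :
    (cycleGraph (n + 2)).Adj a (a + 1) :=
  cycleGraph_adj_self_add.2 (Or.inr rfl)

theorem cycleGraph_not_adj_self_add_two {n : ℕ} (a : Fin (n + 4)) :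
    ¬ (cycleGraph (n + 4)).Adj a (a + 2) := by
  rw [cycleGraph_adj_self_add]
  simp [Fin.ext_iff, Fin.val_neg', Nat.mod_eq_of_lt (show 2 < n + 4 by omega)]

theorem cycleGraph_not_adj_self_add_three {n : ℕ} (a : Fin (n + 5)) :
    ¬ (cycleGraph (n + 5)).Adj a (a + 3) := by
  rw [cycleGraph_adj_self_add]
  simp [Fin.ext_iff, Fin.val_neg', Nat.mod_eq_of_lt (show 3 < n + 5 by omega)]

open Fin.CommRing in
theorem _root_.Fin.forall_of_add_two {n : ℕ} [NeZero n] (hn : Odd n) {P : Fin n → Prop}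
    (h : ∀ a, P a → P (a + 2)) {a : Fin n} (ha : P a) (b : Fin n) : P b := by
  have hk : ∀ k : ℕ, P (a + k * 2) := by
    intro k
    induction k with
    | zero => simpa using ha
    | succ k ih => simpa [add_mul, add_assoc] using h _ ih
  obtain ⟨t, rfl⟩ := hn
  -- `t + 1` is the inverse of `2` modulo `2 * t + 1`.
  convert hk ((b - a).val * (t + 1))
  have : ((2 * t + 1 : ℕ) : Fin (2 * t + 1)) = 0 := Fin.natCast_self _
  push_cast at this ⊢
  linear_combination (a - b) * this

/-- Modelled on the complement of a conflict graph, with `out` the output of a vertex and `B` the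
broadcast vertices: on `B` the graph is complete multipartite with the fibres of `out` as parts,
and `Bᶜ` is independent. -/
structure IsOutputLabelling (H : SimpleGraph V) (out : V → α) (B : Set V) : Prop where
  ne_of_adj : ∀ ⦃v w⦄, H.Adj v w → out v ≠ out w
  adj_of_ne : ∀ ⦃v w⦄, v ∈ B → w ∈ B → out v ≠ out w → H.Adj v w
  mem_of_adj : ∀ ⦃v w⦄, H.Adj v w → v ∉ B → w ∈ B

namespace IsOutputLabelling

variable {G : SimpleGraph W} {H : SimpleGraph V} {out : V → α} {B : Set V}

theorem comap (hH : H.IsOutputLabelling out B) (f : G ↪g H) :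
    G.IsOutputLabelling (out ∘ f) (f ⁻¹' B) where
  ne_of_adj _ _ h := hH.ne_of_adj (f.map_adj_iff.2 h)
  adj_of_ne _ _ hv hw h := f.map_adj_iff.1 (hH.adj_of_ne hv hw h)
  mem_of_adj _ _ h := hH.mem_of_adj (f.map_adj_iff.2 h)

section cycleGraph

open Fin.CommRing

variable {m : ℕ} {out : Fin (m + 5) → α} {B : Set (Fin (m + 5))}

theorem not_mem_add_two (hC : (cycleGraph (m + 5)).IsOutputLabelling out B) {c : Fin (m + 5)}
    (hc : c ∉ B) : c + 2 ∉ B := by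
  intro hc2
  have hc1 : c + 1 ∈ B := hC.mem_of_adj (cycleGraph_adj_self_add_one c) hc
  have hcm1 : c - 1 ∈ B := by
    have := (cycleGraph_adj_self_add_one (c - 1)).symm
    rw [sub_add_cancel] at this
    exact hC.mem_of_adj this hc
  have hout1 : out (c - 1) = out (c + 1) := by
    by_contra hne
    have := hC.adj_of_ne hcm1 hc1 hne
    exact cycleGraph_not_adj_self_add_two (c - 1) (by convert this using 1; ring)
  have hout2 : out (c - 1) = out (c + 2) := by
    by_contra hne
    have := hC.adj_of_ne hcm1 hc2 hne
    exact cycleGraph_not_adj_self_add_three (c - 1) (by convert this using 1; ring)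
  refine hC.ne_of_adj (cycleGraph_adj_self_add_one (c + 1)) ?_
  rw [← hout1, hout2]
  congr 1
  ring

theorem out_add_two (hC : (cycleGraph (m + 5)).IsOutputLabelling out B) {c : Fin (m + 5)}
    (hc : c ∈ B) (hc2 : c + 2 ∈ B) : out (c + 2) = out c := by
  by_contra hne
  exact cycleGraph_not_adj_self_add_two c (hC.adj_of_ne hc hc2 (Ne.symm hne))

theorem not_cycleGraph (hm : Odd (m + 5)) :
    ¬ (cycleGraph (m + 5)).IsOutputLabelling out B := by
  intro hC
  by_cases hB : ∃ c, c ∉ B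
  · obtain ⟨c, hc⟩ := hB
    have hall := Fin.forall_of_add_two (P := (· ∉ B)) hm (fun _ => hC.not_mem_add_two) hc
    exact hall (c + 1) (hC.mem_of_adj (cycleGraph_adj_self_add_one c) hc)
  · push Not at hB
    have hall := Fin.forall_of_add_two (P := fun c => out c = out 0) hm
      (fun c hc => (hC.out_add_two (hB c) (hB (c + 2))).trans hc) rfl
    exact hC.ne_of_adj (cycleGraph_adj_self_add_one 0) ((hall 0).trans (hall (0 + 1)).symm)

end cycleGraph

theorem not_hasOddHole (hH : H.IsOutputLabelling out B) : ¬ H.HasOddHole := by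
  rintro ⟨n, S, hn, hodd, ⟨e⟩⟩
  obtain ⟨m, rfl⟩ : ∃ m, n = m + 5 := ⟨n - 5, by omega⟩
  exact not_cycleGraph hodd (hH.comap ((Embedding.induce S).comp e.symm.toEmbedding))

end IsOutputLabelling

end SimpleGraph

namespace ECG

variable {K N : ℕ} {v w : CGVert K N}

theorem adj_of_ne_of_output_eq (hvw : v ≠ w) (hout : v.2.2 = w.2.2) : (ECG K N).Adj v w := by
  refine ⟨hvw, ?_⟩
  by_cases hin : v.2.1 = w.2.1
  · refine Or.inl ⟨hin, ?_⟩
    have : v.1 ≠ w.1 := fun h => hvw (Prod.ext h (Prod.ext hin hout))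
    cases hv : v.1 <;> cases hw : w.1 <;> simp_all
  · exact Or.inr ⟨hout, hin⟩

theorem adj_of_unicast (hvw : v ≠ w) (hv : v.1 = false) (hin : v.2.1 = w.2.1) :
    (ECG K N).Adj v w :=
  ⟨hvw, Or.inl ⟨hin, Or.inl hv⟩⟩

theorem not_adj_of_broadcast (hv : v.1 = true) (hw : w.1 = true) (hout : v.2.2 ≠ w.2.2) :
    ¬ (ECG K N).Adj v w := by
  rintro ⟨-, ⟨-, h | h⟩ | ⟨h, -⟩⟩ <;> simp_all

end ECG

theorem isOutputLabelling_compl_induce_ECG (K N : ℕ) (i : Fin K) :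
    ((ECG K N).induce {v : CGVert K N | v.1 = true ∨ v.2.1 = i})ᶜ.IsOutputLabelling
      (fun v => v.1.2.2) {v | v.1.1 = true} where
  ne_of_adj v w h hout := h.2 (ECG.adj_of_ne_of_output_eq (Subtype.coe_ne_coe.2 h.1) hout)
  adj_of_ne v w hv hw hout :=
    ⟨fun h => hout (congrArg (fun v => v.1.2.2) h), ECG.not_adj_of_broadcast hv hw hout⟩
  mem_of_adj v w h hv := by
    have hvi : v.1.2.1 = i := v.2.resolve_left hv
    by_contra hw
    have hwi : w.1.2.1 = i := w.2.resolve_left hw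
    exact h.2 <| ECG.adj_of_unicast (Subtype.coe_ne_coe.2 h.1) (by simpa using hv)
      (hvi.trans hwi.symm)

theorem stmt11_general (K N : ℕ) (i : Fin K) :
    ¬ (((ECG K N).induce {v : CGVert K N | v.1 = true ∨ v.2.1 = i})ᶜ).HasOddHole :=
  (isOutputLabelling_compl_induce_ECG K N i).not_hasOddHole

theorem stmt11 (K N : ℕ) (hK : 0 < K) (hN : 0 < N) (i : Fin K) :
    ¬ (((ECG K N).induce {v : CGVert K N | v.1 = true ∨ v.2.1 = i})ᶜ).HasOddHole :=
  stmt11_general K N i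
end

section
/- Fix positive integers K, N and i ∈ {1,…,N}, and let G^o_{1,i} be the subgraph of the enhanced conflict graph G_{K,N} induced by all broadcast vertices together with the unicast vertices u_{ki} (k ∈ {1,…,K}) destined to output i. Then G^o_{1,i} contains no induced cycle of odd length at least 5 (no odd hole). -/
open SimpleGraph Pointwise

/-!
Colour every vertex of `G^o_{1,i}` by its output. Each colour class is a clique, and two
adjacent vertices of different colours cannot both be broadcast vertices, so one of them lies at
output `i`. On an induced cycle `C_n` the vertices at output `i` form a clique of `C_n`, hence lie
on a single edge `{p, p + 1}`; and three consecutive vertices avoiding output `i` would share a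
colour, making the first and the third adjacent. For `n ≥ 5` the vertices `p + 2, p + 3, p + 4`
are such a triple, so no induced cycle of length at least 5 exists, odd or not.
-/

namespace SimpleGraph

variable {V W α : Type*}

structure IsCliqueStar (G : SimpleGraph V) (c : V → α) (a : α) : Prop where
  adj_of_eq : ∀ ⦃x y⦄, x ≠ y → c x = c y → G.Adj x y
  eq_of_adj : ∀ ⦃x y⦄, G.Adj x y → c x ≠ a → c y ≠ a → c x = c y

theorem IsCliqueStar.comap {G : SimpleGraph V} {H : SimpleGraph W} {c : V → α} {a : α}
    (h : G.IsCliqueStar c a) (f : H ↪g G) : H.IsCliqueStar (c ∘ f) a where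
  adj_of_eq _ _ hxy he := f.map_adj_iff.mp (h.adj_of_eq (f.injective.ne hxy) he)
  eq_of_adj _ _ hxy := h.eq_of_adj (f.map_adj_iff.mpr hxy)

section CycleGraph

open Fin.CommRing

variable {m : ℕ}

theorem cycleGraph_adj_iff_eq_add_one {u v : Fin (m + 2)} :
    (cycleGraph (m + 2)).Adj u v ↔ u = v + 1 ∨ v = u + 1 := by
  rw [cycleGraph_adj, sub_eq_iff_eq_add', sub_eq_iff_eq_add', add_comm v, add_comm u]

theorem cycleGraph_not_adj_add_two (x : Fin (m + 4)) : ¬(cycleGraph (m + 4)).Adj x (x + 2) := by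
  rw [cycleGraph_adj_iff_eq_add_one]
  rintro (h | h) <;>
  · rw [← sub_eq_zero] at h
    ring_nf at h
    simp (disch := omega) [Fin.ext_iff, Nat.mod_eq_of_lt] at h

theorem cycleGraph_exists_subset_pair_of_isClique {s : Set (Fin (m + 4))}
    (hs : (cycleGraph (m + 4)).IsClique s) : ∃ p, s ⊆ {p, p + 1} := by
  rcases s.eq_empty_or_nonempty with rfl | ⟨t, ht⟩
  · exact ⟨0, Set.empty_subset _⟩
  by_cases hsub : s ⊆ {t, t + 1}
  · exact ⟨t, hsub⟩
  obtain ⟨r, hr, hrt⟩ := Set.not_subset.mp hsub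
  simp only [Set.mem_insert_iff, Set.mem_singleton_iff, not_or] at hrt
  have htr : t = r + 1 :=
    (cycleGraph_adj_iff_eq_add_one.mp (hs ht hr (Ne.symm hrt.1))).resolve_right hrt.2
  refine ⟨r, fun q hq => ?_⟩
  by_contra hqr
  simp only [Set.mem_insert_iff, Set.mem_singleton_iff, not_or] at hqr
  have hrq : r = q + 1 := (cycleGraph_adj_iff_eq_add_one.mp (hs hq hr hqr.1)).resolve_left hqr.2
  have htq : t = q + 2 := by rw [htr, hrq]; ring
  exact cycleGraph_not_adj_add_two q (htq ▸ hs hq ht (htr ▸ hqr.2))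

theorem IsCliqueStar.exists_eq_of_cycleGraph {c : Fin (m + 4) → α} {a : α}
    (h : (cycleGraph (m + 4)).IsCliqueStar c a) (x : Fin (m + 4)) :
    c x = a ∨ c (x + 1) = a ∨ c (x + 2) = a := by
  by_contra! ⟨h0, h1, h2⟩
  have hc : c x = c (x + 2) :=
    (h.eq_of_adj (cycleGraph_adj_iff_eq_add_one.mpr (Or.inr rfl)) h0 h1).trans
      (h.eq_of_adj (cycleGraph_adj_iff_eq_add_one.mpr (Or.inr (by ring))) h1 h2)
  refine cycleGraph_not_adj_add_two x (h.adj_of_eq (fun hx => ?_) hc)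
  rw [← sub_eq_zero] at hx
  ring_nf at hx
  simp (disch := omega) [Fin.ext_iff, Nat.mod_eq_of_lt] at hx

theorem IsCliqueStar.lt_five_of_cycleGraph {n : ℕ} {c : Fin n → α} {a : α}
    (h : (cycleGraph n).IsCliqueStar c a) : n < 5 := by
  by_contra! hn
  obtain ⟨m, rfl⟩ : ∃ m, n = m + 1 + 4 := ⟨n - 5, by omega⟩
  obtain ⟨p, hp⟩ := cycleGraph_exists_subset_pair_of_isClique (s := c ⁻¹' {a})
    fun x hx y hy hxy => h.adj_of_eq hxy (hx.trans hy.symm)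
  rcases h.exists_eq_of_cycleGraph (p + 2) with hc | hc | hc <;>
  obtain hp | hp : _ = p ∨ _ = p + 1 := hp hc <;>
  · rw [← sub_eq_zero] at hp
    ring_nf at hp
    simp (disch := omega) [Fin.ext_iff, Nat.mod_eq_of_lt] at hp

end CycleGraph

theorem IsCliqueStar.not_hasOddHole {G : SimpleGraph V} {c : V → α} {a : α}
    (h : G.IsCliqueStar c a) : ¬G.HasOddHole := by
  rintro ⟨n, S, hn, -, ⟨e⟩⟩
  have := (h.comap (e.symm.toEmbedding.trans (Embedding.induce S))).lt_five_of_cycleGraph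
  omega

end SimpleGraph

theorem ECG_adj_of_output_eq {K N : ℕ} {v w : CGVert K N} (hne : v ≠ w) (h : v.2.2 = w.2.2) :
    (ECG K N).Adj v w := by
  refine ⟨hne, ?_⟩
  by_cases hin : v.2.1 = w.2.1
  · refine Or.inl ⟨hin, ?_⟩
    by_contra! hb
    exact hne (Prod.ext (by simp_all) (Prod.ext hin h))
  · exact Or.inr ⟨h, hin⟩

theorem ECG_output_eq_of_adj {K N : ℕ} {v w : CGVert K N} (hv : v.1 = true) (hw : w.1 = true)
    (h : (ECG K N).Adj v w) : v.2.2 = w.2.2 := by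
  rcases h.2 with ⟨-, hb | hb⟩ | ⟨hout, -⟩ <;> simp_all

theorem ECG_induce_isCliqueStar {K N : ℕ} (i : Fin N) :
    ((ECG K N).induce {v : CGVert K N | v.1 = true ∨ v.2.2 = i}).IsCliqueStar
      (fun v => v.1.2.2) i where
  adj_of_eq _ _ hne h := ECG_adj_of_output_eq (Subtype.coe_ne_coe.mpr hne) h
  eq_of_adj v w h hv hw :=
    ECG_output_eq_of_adj (v.2.resolve_right hv) (w.2.resolve_right hw) h

theorem stmt12_general (K N : ℕ) (i : Fin N) :
    ¬ ((ECG K N).induce {v : CGVert K N | v.1 = true ∨ v.2.2 = i}).HasOddHole :=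
  (ECG_induce_isCliqueStar i).not_hasOddHole

theorem stmt12 (K N : ℕ) (hK : 0 < K) (hN : 0 < N) (i : Fin N) :
    ¬ ((ECG K N).induce {v : CGVert K N | v.1 = true ∨ v.2.2 = i}).HasOddHole :=
  stmt12_general K N i
end

section
/- Let G be a finite simple graph and let p, q be positive integers. Suppose there is a family of q vertex subsets S_1, …, S_q of G such that each subgraph of G induced by S_t is perfect, and every vertex of G belongs to at least p of the sets S_1, …, S_q. Then QSTAB(G) ⊆ (q/p)·STAB(G). -/
open SimpleGraph Pointwise

/-!
Perfect graphs have `QSTAB = STAB`: for an integer weighting `n` whose clique weights are at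
most `N`, a perfect graph has `N` stable sets covering each vertex `v` exactly `n v` times
(induct on the total weight: the base case `n ≤ 1` is a colouring of the induced subgraph on the
support, and for `n v₀ ≥ 2` one colours `n - 1_{v₀}`, removes the colour class through `v₀` and
recurses with `N - 1` colours), so every rational point of `QSTAB` lies in `STAB`, and `STAB`
is closed.

For the theorem, rescale `x ∈ QSTAB G` on each `S t` by `p / c v`, where `c v ≥ p` counts the
sets containing `v`. The pieces lie in `QSTAB G` and are supported on `S t`, hence lie in
`STAB (G[S t]) ⊆ STAB G`; they sum to `p • x`, and averaging over the `q` pieces gives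
`(p / q) • x ∈ STAB G`.
-/

open Finset

namespace SimpleGraph

variable {W : Type*} {H : SimpleGraph W} {n : W → ℕ} {N : ℕ}

structure IsMulticoloring (H : SimpleGraph W) (n : W → ℕ) (c : W → Finset (Fin N)) : Prop where
  card_eq : ∀ v, #(c v) = n v
  disjoint : ∀ ⦃v w⦄, H.Adj v w → Disjoint (c v) (c w)

namespace IsMulticoloring

variable {c : W → Finset (Fin N)}

theorem pos_of_mem (hc : H.IsMulticoloring n c) {v : W} {i : Fin N} (hi : i ∈ c v) : 0 < n v :=
  hc.card_eq v ▸ card_pos.2 ⟨i, hi⟩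

theorem sum_eq_card_biUnion (hc : H.IsMulticoloring n c) {Q : Finset W}
    (hQ : H.IsClique (Q : Set W)) : ∑ v ∈ Q, n v = #(Q.biUnion c) := by
  rw [card_biUnion fun v hv w hw hvw => hc.disjoint (hQ hv hw hvw)]
  exact sum_congr rfl fun v _ => (hc.card_eq v).symm

theorem sum_le_pred_of_forall_notMem (hc : H.IsMulticoloring n c) {Q : Finset W}
    (hQ : H.IsClique (Q : Set W)) {i : Fin N} (hi : ∀ v ∈ Q, i ∉ c v) :
    ∑ v ∈ Q, n v ≤ N - 1 := by
  have hsub : Q.biUnion c ⊆ univ.erase i := fun j hj => by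
    obtain ⟨v, hv, hj⟩ := mem_biUnion.1 hj
    exact mem_erase.2 ⟨fun hji => hi v hv (hji ▸ hj), mem_univ j⟩
  calc ∑ v ∈ Q, n v = #(Q.biUnion c) := hc.sum_eq_card_biUnion hQ
    _ ≤ #(univ.erase i) := card_le_card hsub
    _ = N - 1 := by rw [card_erase_of_mem (mem_univ i), card_univ, Fintype.card_fin]

theorem isIndepSet_colorClass (hc : H.IsMulticoloring n c) (i : Fin N) :
    H.IsIndepSet {v | i ∈ c v} := fun _ hv _ hw _ hvw =>
  Finset.disjoint_left.1 (hc.disjoint hvw) hv hw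

theorem addColorClass (hc : H.IsMulticoloring n c) {B : Set W} [DecidablePred (· ∈ B)]
    (hB : H.IsIndepSet B) :
    H.IsMulticoloring (fun v => n v + if v ∈ B then 1 else 0)
      (fun v => if v ∈ B then insert (Fin.last N) ((c v).map Fin.castSuccEmb)
        else (c v).map Fin.castSuccEmb) where
  card_eq v := by
    have : Fin.last N ∉ (c v).map Fin.castSuccEmb := by simp [Fin.castSucc_ne_last]
    split_ifs <;> simp [card_insert_of_notMem this, hc.card_eq v]
  disjoint v w hvw := by
    have hcvw := (Finset.disjoint_map Fin.castSuccEmb).2 (hc.disjoint hvw)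
    split_ifs with hv hw hw
    · exact absurd hvw (hB hv hw (H.ne_of_adj hvw))
    all_goals simp_all [Fin.castSucc_ne_last]

/-- Either `Q` meets colour class `i` and loses weight, or it misses that class and its
`m`-weight is spread over the remaining `N` colours. -/
theorem sum_tsub_colorClass_le {m : W → ℕ} {c : W → Finset (Fin (N + 1))}
    (hc : H.IsMulticoloring m c) (i : Fin (N + 1)) (hmn : ∀ v, m v ≤ n v)
    (hn : ∀ v, i ∉ c v → n v = m v) {Q : Finset W} (hQ : H.IsClique (Q : Set W))
    (hnQ : ∑ v ∈ Q, n v ≤ N + 1) :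
    ∑ v ∈ Q, (n v - if i ∈ c v then 1 else 0) ≤ N := by
  by_cases hi : ∃ v ∈ Q, i ∈ c v
  · obtain ⟨v, hvQ, hv⟩ := hi
    have hnv : 0 < n v := (hc.pos_of_mem hv).trans_le (hmn v)
    refine Nat.le_of_lt_succ (lt_of_lt_of_le ?_ hnQ)
    exact sum_lt_sum (fun v _ => Nat.sub_le _ _) ⟨v, hvQ, by rw [if_pos hv]; omega⟩
  · push Not at hi
    calc ∑ v ∈ Q, (n v - if i ∈ c v then 1 else 0) = ∑ v ∈ Q, m v :=
          sum_congr rfl fun v hv => by rw [if_neg (hi v hv), Nat.sub_zero, hn v (hi v hv)]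
      _ ≤ N + 1 - 1 := hc.sum_le_pred_of_forall_notMem hQ hi

end IsMulticoloring

theorem IsClique.map_subtype {S : Set W} {Q : Finset S} (hQ : (H.induce S).IsClique (Q : Set S)) :
    H.IsClique ((Q.map (.subtype _) : Finset W) : Set W) := by
  simpa using isClique_induce_iff.1 hQ

theorem IsPerfect.exists_multicoloring_of_le_one (hH : H.IsPerfect) (hn : ∀ v, n v ≤ 1)
    (hN : ∀ Q : Finset W, H.IsClique (Q : Set W) → ∑ v ∈ Q, n v ≤ N) :
    ∃ c : W → Finset (Fin N), H.IsMulticoloring n c := by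
  classical
  set S : Set W := {v | n v = 1}
  have hclique : (H.induce S).cliqueNum ≤ N := by
    obtain ⟨Q, hQ⟩ := (H.induce S).exists_isNClique_cliqueNum
    calc (H.induce S).cliqueNum = ∑ v ∈ Q.map (.subtype _), n v := by
          simp [sum_map, show ∀ v : S, n v = 1 from fun v => v.2, hQ.card_eq]
      _ ≤ N := hN _ (IsClique.map_subtype hQ.isClique)
  obtain ⟨C⟩ : (H.induce S).Colorable N :=
    chromaticNumber_le_iff_colorable.1 ((hH S).trans_le (by exact_mod_cast hclique))
  refine ⟨fun v => if hv : v ∈ S then {C ⟨v, hv⟩} else ∅, fun v => ?_, fun v w hvw => ?_⟩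
  · by_cases hv : v ∈ S
    · simp [hv, show n v = 1 from hv]
    · simp [hv, show n v = 0 by have : n v ≠ 1 := hv; have := hn v; omega]
  · by_cases hv : v ∈ S <;> by_cases hw : w ∈ S <;> simp only [hv, hw, dif_pos, dif_neg,
      not_false_eq_true, disjoint_empty_left, disjoint_empty_right, disjoint_singleton]
    exact C.valid (show (H.induce S).Adj ⟨v, hv⟩ ⟨w, hw⟩ from hvw)

theorem IsPerfect.exists_multicoloring [Finite W] (hH : H.IsPerfect) (n : W → ℕ) (N : ℕ)
    (hN : ∀ Q : Finset W, H.IsClique (Q : Set W) → ∑ v ∈ Q, n v ≤ N) :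
    ∃ c : W → Finset (Fin N), H.IsMulticoloring n c := by
  classical
  have := Fintype.ofFinite W
  induction hT : ∑ v, n v using Nat.strong_induction_on generalizing n N with
  | _ T ih =>
  by_cases hn : ∀ v, n v ≤ 1
  · exact hH.exists_multicoloring_of_le_one hn hN
  push Not at hn
  obtain ⟨v₀, hv₀⟩ := hn
  obtain ⟨N, rfl⟩ : ∃ N', N = N' + 1 :=
    Nat.exists_eq_succ_of_ne_zero (by have := hN {v₀} (by simp); rw [sum_singleton] at this; omega)
  set m := Function.update n v₀ (n v₀ - 1)
  have hmn : ∀ v, m v ≤ n v := fun v => by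
    by_cases hv : v = v₀ <;> simp [m, hv, Function.update_of_ne]
  have hmv₀ : m v₀ = n v₀ - 1 := Function.update_self ..
  obtain ⟨c, hc⟩ := ih (∑ v, m v)
    (hT ▸ sum_lt_sum (fun v _ => hmn v) ⟨v₀, mem_univ _, by omega⟩)
    m (N + 1) (fun Q hQ => (sum_le_sum fun v _ => hmn v).trans (hN Q hQ)) rfl
  obtain ⟨i, hi⟩ : (c v₀).Nonempty := card_pos.1 (by rw [hc.card_eq]; omega)
  have hnm : ∀ v, i ∉ c v → n v = m v := fun v hv => by
    have : v ≠ v₀ := by rintro rfl; exact hv hi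
    simp [m, this]
  set n' := fun v => n v - if i ∈ c v then 1 else 0
  have hn' : ∀ v, n' v + (if v ∈ {v | i ∈ c v} then 1 else 0) = n v := fun v => by
    by_cases hv : i ∈ c v
    · have := (hc.pos_of_mem hv).trans_le (hmn v)
      simp only [n', Set.mem_ofPred_eq, if_pos hv]
      omega
    · simp [n', hv]
  obtain ⟨c', hc'⟩ := ih (∑ v, n' v)
    (hT ▸ sum_lt_sum (fun v _ => Nat.sub_le _ _)
      ⟨v₀, mem_univ _, by simp only [n', if_pos hi]; omega⟩)
    n' N (fun Q hQ => hc.sum_tsub_colorClass_le i hmn hnm hQ (hN Q hQ)) rfl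
  exact ⟨_, funext hn' ▸ hc'.addColorClass (hc.isIndepSet_colorClass i)⟩

end SimpleGraph

open Filter Topology

section Polytopes

variable {V : Type*} {G : SimpleGraph V}

theorem convex_STAB : Convex ℝ (STAB G) := convex_convexHull ℝ _

theorem isClosed_STAB [Finite V] : IsClosed (STAB G) := by
  refine Set.Finite.isClosed_convexHull ℝ ((Set.finite_range fun S : Set V =>
    S.indicator fun _ => (1 : ℝ)).subset ?_)
  rintro _ ⟨S, -, rfl⟩
  exact ⟨S, rfl⟩

theorem indicator_mem_STAB {S : Set V} (hS : G.IsIndepSet S) :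
    S.indicator (fun _ => 1) ∈ STAB G :=
  subset_convexHull ℝ _ ⟨S, fun _ hv _ hw hvw => hS hv hw (G.ne_of_adj hvw) hvw, rfl⟩

theorem mem_QSTAB_of_le {x y : V → ℝ} (hx : x ∈ QSTAB G) (hy : 0 ≤ y) (hyx : y ≤ x) :
    y ∈ QSTAB G :=
  ⟨hy, fun Q hQ => (sum_le_sum fun v _ => hyx v).trans (hx.2 Q hQ)⟩

theorem restrict_mem_QSTAB_induce {x : V → ℝ} (hx : x ∈ QSTAB G) (S : Set V) :
    (fun v : S => x v) ∈ QSTAB (G.induce S) :=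
  ⟨fun v => hx.1 v, fun Q hQ => by simpa [sum_map] using hx.2 _ hQ.map_subtype⟩

theorem extend_mem_STAB_of_mem_STAB_induce {S : Set V} {z : S → ℝ}
    (hz : z ∈ STAB (G.induce S)) : Function.extend Subtype.val z 0 ∈ STAB G := by
  have h := Set.mem_image_of_mem (Function.ExtendByZero.linearMap ℝ (Subtype.val : S → V)) hz
  rw [STAB, LinearMap.image_convexHull] at h
  refine convexHull_mono ?_ h
  rintro _ ⟨_, ⟨T, hT, rfl⟩, rfl⟩
  refine ⟨Subtype.val '' T, ?_, funext fun u => ?_⟩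
  · rintro _ ⟨v, hv, rfl⟩ _ ⟨w, hw, rfl⟩
    exact hT v hv w hw
  · by_cases hu : u ∈ S
    · lift u to S using hu
      rw [Function.ExtendByZero.linearMap_apply, Subtype.val_injective.extend_apply,
        Set.indicator_image Subtype.val_injective]
      rfl
    · simp [hu]

namespace SimpleGraph

theorem IsMulticoloring.mem_STAB {n : V → ℕ} {N : ℕ} {c : V → Finset (Fin N)}
    (hc : G.IsMulticoloring n c) (hN : 0 < N) : (fun v => (n v : ℝ) / N) ∈ STAB G := by
  have hx : (fun v => (n v : ℝ) / N) =
      ∑ i : Fin N, (1 / N : ℝ) • {v | i ∈ c v}.indicator (fun _ => 1) := by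
    funext v
    simp [Set.indicator_apply, ← hc.card_eq v, div_eq_mul_inv]
  rw [hx]
  refine convex_STAB.sum_mem (fun _ _ => by positivity) (by simp [hN.ne'])
    fun i _ => indicator_mem_STAB (hc.isIndepSet_colorClass i)

theorem IsPerfect.QSTAB_subset_STAB [Finite V] (hG : G.IsPerfect) : QSTAB G ⊆ STAB G := by
  intro x hx
  have hlim : Tendsto (fun K : ℕ => fun v => (⌊x v * K⌋₊ : ℝ) / K) atTop (𝓝 x) :=
    tendsto_pi_nhds.2 fun v =>
      (tendsto_nat_floor_mul_div_atTop (hx.1 v)).comp tendsto_natCast_atTop_atTop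
  refine isClosed_STAB.mem_of_tendsto hlim (eventually_atTop.2 ⟨1, fun K hK => ?_⟩)
  suffices hN : ∀ Q : Finset V, G.IsClique (Q : Set V) → ∑ v ∈ Q, ⌊x v * K⌋₊ ≤ K by
    obtain ⟨c, hc⟩ := hG.exists_multicoloring _ K hN
    exact hc.mem_STAB hK
  intro Q hQ
  have : (∑ v ∈ Q, ⌊x v * K⌋₊ : ℝ) ≤ K := calc
    (∑ v ∈ Q, ⌊x v * K⌋₊ : ℝ) ≤ ∑ v ∈ Q, x v * K :=
        sum_le_sum fun v _ => Nat.floor_le (mul_nonneg (hx.1 v) K.cast_nonneg)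
    _ = (∑ v ∈ Q, x v) * K := (sum_mul _ _ _).symm
    _ ≤ 1 * K := mul_le_mul_of_nonneg_right (hx.2 Q hQ) K.cast_nonneg
    _ = K := one_mul _
  exact_mod_cast this

end SimpleGraph

theorem mem_STAB_of_mem_QSTAB_of_isPerfect_induce [Finite V] {S : Set V}
    (hS : (G.induce S).IsPerfect) {x : V → ℝ} (hx : x ∈ QSTAB G) (hxS : ∀ v ∉ S, x v = 0) :
    x ∈ STAB G := by
  convert extend_mem_STAB_of_mem_STAB_induce
    (hS.QSTAB_subset_STAB (restrict_mem_QSTAB_induce hx S))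
  funext v
  by_cases hv : v ∈ S
  · rw [Function.extend_val_apply hv]
  · rw [Function.extend_val_apply' hv, hxS v hv, Pi.zero_apply]

theorem indicator_mul_mem_STAB [Finite V] {S : Set V} (hS : (G.induce S).IsPerfect)
    {x w : V → ℝ} (hx : x ∈ QSTAB G) (hw₀ : 0 ≤ w) (hw₁ : w ≤ 1) :
    S.indicator (w * x) ∈ STAB G := by
  have hwx : 0 ≤ w * x := fun v => mul_nonneg (hw₀ v) (hx.1 v)
  refine mem_STAB_of_mem_QSTAB_of_isPerfect_induce hS (mem_QSTAB_of_le hx ?_ ?_)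
    fun v hv => Set.indicator_of_notMem hv _
  · exact fun v => Set.indicator_nonneg (fun v _ => hwx v) v
  · exact fun v => (Set.indicator_le_self' (fun v _ => hwx v) v).trans
      (mul_le_of_le_one_left (hx.1 v) (hw₁ v))

end Polytopes

theorem stmt16 {V : Type*} [Fintype V] (G : SimpleGraph V) (p q : ℕ)
    (hp : 0 < p) (hq : 0 < q) (S : Fin q → Set V)
    (hperf : ∀ t : Fin q, (G.induce (S t)).IsPerfect)
    (hcover : ∀ v : V, p ≤ Nat.card {t : Fin q // v ∈ S t}) :
    QSTAB G ⊆ ((q : ℝ) / p) • STAB G := by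
  classical
  intro x hx
  set c : V → ℕ := fun v => #{t | v ∈ S t}
  have hcp : ∀ v, p ≤ c v := fun v => by
    simpa [c, Nat.card_eq_fintype_card, Fintype.card_subtype] using hcover v
  set w : V → ℝ := fun v => p / c v
  have hy : ∀ t, (S t).indicator (w * x) ∈ STAB G := fun t =>
    indicator_mul_mem_STAB (hperf t) hx (fun v => by positivity)
      fun v => show (p : ℝ) / c v ≤ 1 from
        div_le_one_of_le₀ (by exact_mod_cast hcp v) (c v).cast_nonneg
  have hsum : ∑ t, (S t).indicator (w * x) = (p : ℝ) • x := by
    funext v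
    have hcv : (c v : ℝ) ≠ 0 := Nat.cast_ne_zero.2 (hp.trans_le (hcp v)).ne'
    rw [Finset.sum_apply, sum_indicator_eq_sum_filter, sum_const, nsmul_eq_mul]
    change (c v : ℝ) * (p / c v * x v) = p * x v
    field_simp
  refine ⟨∑ t, (q : ℝ)⁻¹ • (S t).indicator (w * x),
    convex_STAB.sum_mem (fun _ _ => by positivity) (by simp [hq.ne']) fun t _ => hy t, ?_⟩
  show (q / p : ℝ) • _ = x
  rw [← smul_sum, hsum, smul_smul, smul_smul, show (q / p : ℝ) * (q : ℝ)⁻¹ * p = 1 by field_simp,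
    one_smul]
end

section
/- In the enhanced conflict graph G_{2,3}, the five vertices u_{11}, b_{12}, u_{22}, u_{23}, b_{13} induce a chordless 5-cycle (in the cyclic order u_{11} ~ b_{12} ~ u_{22} ~ u_{23} ~ b_{13} ~ u_{11}); consequently G_{2,3} is not a perfect graph. -/
open SimpleGraph Pointwise

/-! The vertices `u₁₁, b₁₂, u₂₂, u₂₃, b₁₃` form an odd hole of length 5 in `G_{2,3}`. An odd
cycle of length at least 5 is triangle-free, so its clique number is 2, but it needs three
colours; hence no graph containing an odd hole as an induced subgraph is perfect. -/

instance (K N : ℕ) : DecidableRel (ECG K N).Adj := fun v w =>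
  show Decidable (v ≠ w ∧ _) from inferInstance

namespace SimpleGraph

variable {V : Type*} {G : SimpleGraph V}

theorem CliqueFree.cliqueNum_lt {n : ℕ} (h : G.CliqueFree n) : G.cliqueNum < n := by
  obtain ⟨s, hs⟩ := G.exists_isNClique_cliqueNum
  by_contra! hn
  exact h.mono hn s hs

theorem cycleGraph_cliqueFree_three {n : ℕ} (hn : 4 ≤ n) : (cycleGraph n).CliqueFree 3 := by
  obtain ⟨m, rfl⟩ : ∃ m, n = m + 2 := ⟨n - 2, by omega⟩
  have h1 : (1 : Fin (m + 2)) ≠ 0 := by simp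
  have h3 : (3 : Fin (m + 2)) ≠ 0 := by
    simp [Fin.ext_iff, Nat.mod_eq_of_lt (show 3 < m + 2 by omega)]
  intro s hs
  obtain ⟨a, b, c, hab, hac, hbc, rfl⟩ := is3Clique_iff.1 hs
  rw [cycleGraph_adj] at hab hac hbc
  -- `a - c = (a - b) + (b - c)` forces `±1 = ±1 ± 1`, i.e. `1 = 0` or `3 = 0`.
  rcases hab with hab | hab <;> rcases hac with hac | hac <;> rcases hbc with hbc | hbc <;> grind

theorem HasOddHole.not_isPerfect (h : G.HasOddHole) : ¬ G.IsPerfect := by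
  obtain ⟨n, S, hn, hodd, ⟨e⟩⟩ := h
  intro hperf
  have hχ : (G.induce S).chromaticNumber = 3 :=
    (chromaticNumber_congr e).trans (chromaticNumber_cycleGraph_of_odd n (by omega) hodd)
  have hω : (G.induce S).cliqueNum < 3 :=
    ((cycleGraph_cliqueFree_three (by omega)).comap e.toEmbedding.isContained).cliqueNum_lt
  have := hperf S
  rw [hχ] at this
  norm_cast at this
  omega

end SimpleGraph

def hole : cycleGraph 5 ↪g ECG 2 3 where
  toFun := ![(false, 0, 0), (true, 0, 1), (false, 1, 1), (false, 1, 2), (true, 0, 2)]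
  inj' := by decide
  map_rel_iff' := by decide

theorem range_hole : Set.range hole =
    {(false, 0, 0), (true, 0, 1), (false, 1, 1), (false, 1, 2), (true, 0, 2)} := by
  simp only [hole, RelEmbedding.coe_mk, Function.Embedding.coeFn_mk, Matrix.range_cons,
    Matrix.range_empty, Set.union_empty, Set.singleton_union]

theorem stmt17 :
    (ECG 2 3).Adj (false, 0, 0) (true, 0, 1) ∧
    (ECG 2 3).Adj (true, 0, 1) (false, 1, 1) ∧
    (ECG 2 3).Adj (false, 1, 1) (false, 1, 2) ∧
    (ECG 2 3).Adj (false, 1, 2) (true, 0, 2) ∧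
    (ECG 2 3).Adj (true, 0, 2) (false, 0, 0) ∧
    ¬ (ECG 2 3).Adj (false, 0, 0) (false, 1, 1) ∧
    ¬ (ECG 2 3).Adj (false, 0, 0) (false, 1, 2) ∧
    ¬ (ECG 2 3).Adj (true, 0, 1) (false, 1, 2) ∧
    ¬ (ECG 2 3).Adj (true, 0, 1) (true, 0, 2) ∧
    ¬ (ECG 2 3).Adj (false, 1, 1) (true, 0, 2) ∧
    Nonempty ((ECG 2 3).induce
      ({(false, 0, 0), (true, 0, 1), (false, 1, 1), (false, 1, 2), (true, 0, 2)} :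
        Set (CGVert 2 3)) ≃g cycleGraph 5) ∧
    ¬ (ECG 2 3).IsPerfect := by
  have e := range_hole ▸ hole.isoInduceRange.symm
  exact ⟨by decide, by decide, by decide, by decide, by decide, by decide, by decide,
    by decide, by decide, by decide, ⟨e⟩,
    HasOddHole.not_isPerfect ⟨5, _, le_rfl, by decide, ⟨e⟩⟩⟩
end
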